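/- Let Γ = ⟨α⟩ ⊕ ⟨β⟩ ⊕ ⟨γ⟩ ≅ (ℤ/2)³ be the group generated by the involutions α(x) = (x₁, -x₂, -x₃, 1/2 - x₄, -x₅), β(x) = (-x₁, 1/2 - x₂, -x₃, x₄, -x₅), γ(x) = (-x₁, -x₂, 1/2 - x₃, -x₄, x₅) on T^5 = ℝ^5/ℤ^5. Then the subgroup ⟨β, γ⟩ acts freely on the 16-element set of fixed circles of α, and hence the orbit set has exactly 4 elements. -/
import Mathlib


abbrev T5 : Type := Fin 5 → AddCircle (1 : ℝ)

noncomputable def half : AddCircle (1 : ℝ) := ((1/2 : ℝ) : AddCircle (1 : ℝ))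
noncomputable def quarter : AddCircle (1 : ℝ) := ((1/4 : ℝ) : AddCircle (1 : ℝ))
noncomputable def threeQuarters : AddCircle (1 : ℝ) := ((3/4 : ℝ) : AddCircle (1 : ℝ))

/-- `β(x) = (-x₁, 1/2 - x₂, -x₃, x₄, -x₅)`. -/
noncomputable def betaMap (x : T5) : T5 := ![-x 0, half - x 1, -x 2, x 3, -x 4]

/-- `γ(x) = (-x₁, -x₂, 1/2 - x₃, -x₄, x₅)`. -/
noncomputable def gammaMap (x : T5) : T5 := ![-x 0, -x 1, half - x 2, -x 3, x 4]

/-- The circle `S¹ × {(p₂,p₃,p₄,p₅)}` in `T⁵`. -/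
def circleAt (p₂ p₃ p₄ p₅ : AddCircle (1 : ℝ)) : Set T5 :=
  {x : T5 | x 1 = p₂ ∧ x 2 = p₃ ∧ x 3 = p₄ ∧ x 4 = p₅}

/-- The family of the 16 fixed circles of `α`. -/
noncomputable def fixedCircles : Set (Set T5) :=
  {C | ∃ p₂ p₃ p₄ p₅ : AddCircle (1 : ℝ),
    (p₂ = 0 ∨ p₂ = half) ∧ (p₃ = 0 ∨ p₃ = half) ∧
    (p₄ = quarter ∨ p₄ = threeQuarters) ∧ (p₅ = 0 ∨ p₅ = half) ∧
    C = circleAt p₂ p₃ p₄ p₅}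

/-- The action of `(b, c) ∈ ⟨β⟩ × ⟨γ⟩ ≅ (ℤ/2)²` on subsets of `T⁵`,
sending `C` to the image `β^b γ^c (C)`. -/
noncomputable def bgAct (b c : Bool) (C : Set T5) : Set T5 :=
  ((cond b betaMap id) ∘ (cond c gammaMap id)) '' C

namespace Stmt5Aux

lemma coe_eq_of (a b : ℝ) (n : ℤ) (h : a - b = n) : (a : AddCircle (1:ℝ)) = b := by
  have : a - b ∈ AddSubgroup.zmultiples (1:ℝ) := ⟨n, by simp [h]⟩
  exact (QuotientAddGroup.eq_iff_sub_mem).mpr this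

lemma coe_ne_of {a b : ℝ} (ha : a ∈ Set.Ico (0:ℝ) 1) (hb : b ∈ Set.Ico (0:ℝ) 1) (h : a ≠ b) :
    (a : AddCircle (1:ℝ)) ≠ b := by
  intro hc
  exact h ((AddCircle.coe_eq_coe_iff_of_mem_Ico (a := 0) (by simpa using ha)
    (by simpa using hb)).mp hc)

lemma half_ne_zero : half ≠ 0 := by
  have := coe_ne_of (a := 1/2) (b := 0) (by norm_num) (by norm_num) (by norm_num)
  simpa [half] using this

lemma neg_half : -half = half := by
  have : ((-(1/2) : ℝ) : AddCircle (1:ℝ)) = ((1/2:ℝ) : AddCircle (1:ℝ)) :=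
    coe_eq_of _ _ (-1) (by norm_num)
  simpa [half] using this

lemma neg_quarter : -quarter = threeQuarters := by
  have : ((-(1/4) : ℝ) : AddCircle (1:ℝ)) = ((3/4:ℝ) : AddCircle (1:ℝ)) :=
    coe_eq_of _ _ (-1) (by norm_num)
  simpa [quarter, threeQuarters] using this

lemma neg_threeQuarters : -threeQuarters = quarter := by
  rw [← neg_quarter, neg_neg]

lemma quarter_ne : quarter ≠ threeQuarters := by
  have := coe_ne_of (a := 1/4) (b := 3/4) (by norm_num) (by norm_num) (by norm_num)
  simpa [quarter, threeQuarters] using this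

/-- parameter encodings -/
noncomputable def eVal : Bool → AddCircle (1:ℝ) := fun b => cond b half 0
noncomputable def fVal : Bool → AddCircle (1:ℝ) := fun b => cond b threeQuarters quarter

lemma eVal_inj : Function.Injective eVal := by
  intro a b h
  cases a <;> cases b <;> simp_all [eVal] <;>
    first
      | exact half_ne_zero h.symm
      | exact half_ne_zero h

lemma fVal_inj : Function.Injective fVal := by
  intro a b h
  cases a <;> cases b <;> simp_all [fVal] <;>
    first
      | exact quarter_ne h
      | exact quarter_ne h.symm

lemma neg_eVal (b : Bool) : -eVal b = eVal b := by
  cases b <;> simp [eVal, neg_half]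

lemma half_sub_eVal (b : Bool) : half - eVal b = eVal (!b) := by
  cases b <;> simp [eVal]

lemma neg_fVal (b : Bool) : -fVal b = fVal (!b) := by
  cases b <;> simp [fVal, neg_quarter, neg_threeQuarters]

abbrev P : Type := Bool × Bool × Bool × Bool

noncomputable def F : P → Set T5 :=
  fun q => circleAt (eVal q.1) (eVal q.2.1) (fVal q.2.2.1) (eVal q.2.2.2)

/-- circleAt parameters are recoverable. -/
lemma circleAt_inj {a b c d a' b' c' d' : AddCircle (1:ℝ)}
    (h : circleAt a b c d = circleAt a' b' c' d') : a = a' ∧ b = b' ∧ c = c' ∧ d = d' := by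
  have hx : (![0, a, b, c, d] : T5) ∈ circleAt a b c d := by
    simp [circleAt]
  rw [h] at hx
  simpa [circleAt] using hx

lemma F_inj : Function.Injective F := by
  rintro ⟨a, b, c, d⟩ ⟨a', b', c', d'⟩ h
  obtain ⟨h1, h2, h3, h4⟩ := circleAt_inj h
  simp only [Prod.mk.injEq]
  exact ⟨eVal_inj h1, eVal_inj h2, fVal_inj h3, eVal_inj h4⟩

lemma betaMap_invol : Function.Involutive betaMap := by
  intro x
  funext i
  fin_cases i <;> simp [betaMap]

lemma gammaMap_invol : Function.Involutive gammaMap := by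
  intro x
  funext i
  fin_cases i <;> simp [gammaMap]

lemma betaMap_image (p₂ p₃ p₄ p₅ : AddCircle (1:ℝ)) :
    betaMap '' circleAt p₂ p₃ p₄ p₅ = circleAt (half - p₂) (-p₃) p₄ (-p₅) := by
  ext y
  constructor
  · rintro ⟨x, ⟨h1, h2, h3, h4⟩, rfl⟩
    refine ⟨?_, ?_, ?_, ?_⟩ <;> simp [betaMap, h1, h2, h3, h4]
  · rintro ⟨h1, h2, h3, h4⟩
    refine ⟨betaMap y, ⟨?_, ?_, ?_, ?_⟩, betaMap_invol y⟩ <;>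
      simp [betaMap, h1, h2, h3, h4]

lemma gammaMap_image (p₂ p₃ p₄ p₅ : AddCircle (1:ℝ)) :
    gammaMap '' circleAt p₂ p₃ p₄ p₅ = circleAt (-p₂) (half - p₃) (-p₄) p₅ := by
  ext y
  constructor
  · rintro ⟨x, ⟨h1, h2, h3, h4⟩, rfl⟩
    refine ⟨?_, ?_, ?_, ?_⟩ <;> simp [gammaMap, h1, h2, h3, h4]
  · rintro ⟨h1, h2, h3, h4⟩
    refine ⟨gammaMap y, ⟨?_, ?_, ?_, ?_⟩, gammaMap_invol y⟩ <;>
      simp [gammaMap, h1, h2, h3, h4]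

def actP (b c : Bool) (q : P) : P := (xor b q.1, xor c q.2.1, xor c q.2.2.1, q.2.2.2)

lemma bgAct_F (b c : Bool) (q : P) : bgAct b c (F q) = F (actP b c q) := by
  obtain ⟨q1, q2, q3, q4⟩ := q
  cases b <;> cases c
  · simp [bgAct, F, actP]
  · simp only [bgAct, cond]
    rw [show ((id : T5 → T5) ∘ gammaMap) = gammaMap from rfl]
    simp [F, actP, gammaMap_image, neg_eVal, half_sub_eVal, neg_fVal]
  · simp only [bgAct, cond]
    rw [show (betaMap ∘ (id : T5 → T5)) = betaMap from rfl]
    simp [F, actP, betaMap_image, neg_eVal, half_sub_eVal, neg_fVal]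
  · simp only [bgAct, cond]
    rw [show ((betaMap ∘ gammaMap) '' (F (q1,q2,q3,q4))) = betaMap '' (gammaMap '' (F (q1,q2,q3,q4))) from Set.image_comp _ _ _]
    simp [F, actP, gammaMap_image, betaMap_image, neg_eVal, half_sub_eVal, neg_fVal]



lemma actP_actP (b c b' c' : Bool) (q : P) :
    actP b' c' (actP b c q) = actP (xor b' b) (xor c' c) q := by
  simp [actP, Bool.xor_assoc]

lemma actP_false_false (q : P) : actP false false q = q := by
  simp [actP]

noncomputable def S : P → Set P := fun q => {p | ∃ b c : Bool, p = actP b c q}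

lemma S_act (b c : Bool) (q : P) : S (actP b c q) = S q := by
  ext p
  constructor
  · rintro ⟨b', c', rfl⟩
    exact ⟨xor b' b, xor c' c, actP_actP b c b' c' q⟩
  · rintro ⟨b', c', rfl⟩
    refine ⟨xor b' b, xor c' c, ?_⟩
    rw [actP_actP]
    congr 1 <;> simp [Bool.xor_assoc]

def g : Bool × Bool → P := fun z => (false, false, z.1, z.2)

lemma S_eq_S_g (q : P) : S q = S (g (xor q.2.1 q.2.2.1, q.2.2.2)) := by
  obtain ⟨q1, q2, q3, q4⟩ := q
  have : g (xor q2 q3, q4) = actP q1 q2 (q1, q2, q3, q4) := by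
    simp [g, actP]
  rw [this, S_act]

lemma Sg_inj : Function.Injective (S ∘ g) := by
  rintro ⟨x, y⟩ ⟨x', y'⟩ h
  have hm : g (x', y') ∈ S (g (x', y')) := ⟨false, false, (actP_false_false _).symm⟩
  rw [← Function.comp_apply (f := S) (g := g), ← h] at hm
  obtain ⟨b, c, hb⟩ := hm
  simp only [g, actP, Prod.mk.injEq, Bool.xor_false] at hb
  obtain ⟨hb1, hb2, hb3, hb4⟩ := hb
  subst hb4
  cases hb2
  simp only [Bool.false_xor] at hb3
  simp [hb3]

lemma range_S : Set.range S = Set.range (S ∘ g) := by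
  apply Set.Subset.antisymm
  · rintro _ ⟨q, rfl⟩
    exact ⟨(xor q.2.1 q.2.2.1, q.2.2.2), (S_eq_S_g q).symm⟩
  · rintro _ ⟨z, rfl⟩
    exact ⟨g z, rfl⟩

lemma fixedCircles_eq : fixedCircles = Set.range F := by
  ext C
  constructor
  · rintro ⟨p2, p3, p4, p5, h2, h3, h4, h5, rfl⟩
    have e2 : ∃ b, p2 = eVal b := by rcases h2 with rfl | rfl; exacts [⟨false, rfl⟩, ⟨true, rfl⟩]
    have e3 : ∃ b, p3 = eVal b := by rcases h3 with rfl | rfl; exacts [⟨false, rfl⟩, ⟨true, rfl⟩]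
    have e4 : ∃ b, p4 = fVal b := by rcases h4 with rfl | rfl; exacts [⟨false, rfl⟩, ⟨true, rfl⟩]
    have e5 : ∃ b, p5 = eVal b := by rcases h5 with rfl | rfl; exacts [⟨false, rfl⟩, ⟨true, rfl⟩]
    obtain ⟨b2, rfl⟩ := e2; obtain ⟨b3, rfl⟩ := e3; obtain ⟨b4, rfl⟩ := e4; obtain ⟨b5, rfl⟩ := e5
    exact ⟨(b2, b3, b4, b5), rfl⟩
  · rintro ⟨⟨b2, b3, b4, b5⟩, rfl⟩
    refine ⟨eVal b2, eVal b3, fVal b4, eVal b5, ?_, ?_, ?_, ?_, rfl⟩ <;>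
      (cases b2 <;> cases b3 <;> cases b4 <;> cases b5 <;> simp [eVal, fVal])

end Stmt5Aux

open Stmt5Aux

/-- `⟨β, γ⟩ ≅ (ℤ/2)²` acts freely on the 16 fixed circles of `α`,
and the resulting orbit set has exactly 4 elements. -/
theorem stmt5 :
    fixedCircles.ncard = 16 ∧
    (∀ b c : Bool, ¬(b = false ∧ c = false) →
      ∀ C ∈ fixedCircles, bgAct b c C ≠ C) ∧
    (∀ b c : Bool, ∀ C ∈ fixedCircles, bgAct b c C ∈ fixedCircles) ∧
    {O : Set (Set T5) | ∃ C ∈ fixedCircles, O = {D | ∃ b c : Bool, D = bgAct b c C}}.ncard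
      = 4 := by
  refine ⟨?_, ?_, ?_, ?_⟩
  · rw [fixedCircles_eq, ← Set.image_univ, Set.ncard_image_of_injective _ F_inj,
      Set.ncard_univ]
    simp [Nat.card_eq_fintype_card]
  · intro b c hbc C hC h
    rw [fixedCircles_eq] at hC
    obtain ⟨q, rfl⟩ := hC
    rw [bgAct_F] at h
    have := F_inj h
    obtain ⟨q1, q2, q3, q4⟩ := q
    cases b <;> cases c <;> simp [actP] at this hbc
  · intro b c C hC
    rw [fixedCircles_eq] at hC ⊢
    obtain ⟨q, rfl⟩ := hC
    rw [bgAct_F]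
    exact ⟨_, rfl⟩
  · have key : {O : Set (Set T5) | ∃ C ∈ fixedCircles, O = {D | ∃ b c : Bool, D = bgAct b c C}}
        = (Set.image F) '' (Set.range S) := by
      ext O
      constructor
      · rintro ⟨C, hC, rfl⟩
        rw [fixedCircles_eq] at hC
        obtain ⟨q, rfl⟩ := hC
        refine ⟨S q, ⟨q, rfl⟩, ?_⟩
        ext D
        constructor
        · rintro ⟨p, ⟨b, c, rfl⟩, rfl⟩
          exact ⟨b, c, (bgAct_F b c q).symm⟩
        · rintro ⟨b, c, rfl⟩
          exact ⟨actP b c q, ⟨b, c, rfl⟩, (bgAct_F b c q).symm⟩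
      · rintro ⟨s, ⟨q, rfl⟩, rfl⟩
        refine ⟨F q, by rw [fixedCircles_eq]; exact ⟨q, rfl⟩, ?_⟩
        ext D
        constructor
        · rintro ⟨p, ⟨b, c, rfl⟩, rfl⟩
          exact ⟨b, c, (bgAct_F b c q).symm⟩
        · rintro ⟨b, c, rfl⟩
          exact ⟨actP b c q, ⟨b, c, rfl⟩, (bgAct_F b c q).symm⟩
    rw [key, Set.ncard_image_of_injective _ (Set.image_injective.mpr F_inj), range_S,
      ← Set.image_univ, Set.ncard_image_of_injective _ Sg_inj, Set.ncard_univ]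
    simp [Nat.card_eq_fintype_card]
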